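/- Let M be a monoid and A an M-semimodule. The map θ(M,A): H²(M,A) → E(M,A) sending the cohomology class of a 2-cocycle f to the similarity class of the extension E_f is a well-defined surjective map of pointed sets. If moreover A is cancellative, then θ(M,A) is a bijection. -/

import Mathlib

universe u v

section SchreierSemimodule

/- Throughout, `M` is a (multiplicatively written) monoid and an `M`-semimodule is an
additively written abelian monoid `A` together with a `DistribMulAction` of `M` on `A`,
i.e. an action satisfying `x • (a + a') = x • a + x • a'`, `x • 0 = 0`,
`(x * y) • a = x • (y • a)` and `1 • a = a`. -/

variable (M : Type u) (A : Type v) [Monoid M] [AddCommMonoid A] [DistribMulAction M A]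

/-- `u` is a representative over `x ∈ M` for the sequence `A →^κ B →^σ M`:
`σ u = x` and every `b ∈ σ⁻¹(x)` can be written uniquely as `b = κ a + u`. -/
def IsRepOf {B : Type*} [AddMonoid B] (κ : A →+ B) (σ : B → M) (x : M) (u : B) : Prop :=
  σ u = x ∧ ∀ b : B, σ b = x → ∃! a : A, b = κ a + u

/-- A Schreier extension of the `M`-semimodule `A` by the monoid `M`:  a sequence
`A →^κ B →^σ M` of monoids (`σ` being a homomorphism from the additively written
monoid `B` to the multiplicatively written monoid `M`) such that `κ` is injective,
`σ` is surjective, `κ(A) = σ⁻¹(1)`, every `x ∈ M` admits a representative, and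
moreover `b + κ a = κ (σ b • a) + b` for all `a ∈ A`, `b ∈ B`. -/
structure SchreierExtension where
  /-- the middle monoid of the extension -/
  B : Type (max u v)
  [instB : AddMonoid B]
  κ : A →+ B
  σ : B → M
  sigma_zero : σ 0 = 1
  sigma_add : ∀ b₁ b₂ : B, σ (b₁ + b₂) = σ b₁ * σ b₂
  kappa_inj : Function.Injective κ
  sigma_surj : Function.Surjective σ
  range_eq : ∀ b : B, σ b = 1 ↔ b ∈ Set.range κ
  rep_exists : ∀ x : M, ∃ u : B, IsRepOf M A κ σ x u
  compat : ∀ (a : A) (b : B), b + κ a = κ (σ b • a) + b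

attribute [instance] SchreierExtension.instB

variable {M A}

/-- `u` is a representative of the Schreier extension `E` over `x`. -/
def SchreierExtension.IsRep (E : SchreierExtension M A) (x : M) (u : E.B) : Prop :=
  IsRepOf M A E.κ E.σ x u

variable {A' : Type v} [AddCommMonoid A'] [DistribMulAction M A']

/-- `(α, β, 1_M)` is a morphism of Schreier extensions from `E` to `E'`:  the two squares
commute and `β` carries representatives to representatives. -/
def IsSchreierHom (E : SchreierExtension M A) (E' : SchreierExtension M A')
    (α : A →+ A') (β : E.B →+ E'.B) : Prop :=
  (∀ a : A, β (E.κ a) = E'.κ (α a)) ∧ (∀ b : E.B, E'.σ (β b) = E.σ b) ∧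
    ∀ (x : M) (u : E.B), E.IsRep x u → E'.IsRep x (β u)

/-- Two Schreier extensions of the `M`-semimodule `A` by `M` are congruent if there is a
monoid homomorphism between the middle monoids which commutes with the inclusions and the
projections and carries representatives to representatives, i.e. a morphism of the form
`(1_A, β, 1_M)`. -/
def SchreierCongruent (E E' : SchreierExtension M A) : Prop :=
  ∃ β : E.B →+ E'.B, IsSchreierHom E E' (AddMonoidHom.id A) β

end SchreierSemimodule


section Cocycles

variable (M : Type u) (A : Type v) [Monoid M] [AddCommMonoid A] [DistribMulAction M A]

/-- A (normalized) `2`-cocycle of the monoid `M` with coefficients in the `M`-semimodule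
`A`: `f (x, 1) = 0 = f (1, y)` and `x • f (y, z) + f (x, y*z) = f (x*y, z) + f (x, y)`. -/
def IsCocycle (f : M → M → A) : Prop :=
  (∀ x : M, f x 1 = 0) ∧ (∀ y : M, f 1 y = 0) ∧
    ∀ x y z : M, x • f y z + f x (y * z) = f (x * y) z + f x y

/-- The type of (normalized) `2`-cocycles of `M` with coefficients in `A`. -/
def Cocycle : Type (max u v) := {f : M → M → A // IsCocycle M A f}

/-- The zero `2`-cocycle. -/
def zeroCocycle : Cocycle M A :=
  ⟨fun _ _ => (0 : A), fun _ => rfl, fun _ => rfl, by intro x y z; simp⟩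

/-- Two `2`-cocycles `f, f'` are strongly cohomologous if there is a function
`g : M → U(A)` into the group of invertible elements of `A` with `g 1 = 0` and
`f (x, y) = f' (x, y) + x • g y − g (x*y) + g x` for all `x, y ∈ M`. -/
def StronglyCohomologous (f f' : M → M → A) : Prop :=
  ∃ g : M → AddUnits A, g 1 = 0 ∧
    ∀ x y : M, f x y = f' x y + x • (g y : A) + ((-(g (x * y)) : AddUnits A) : A) + (g x : A)

/-- Two `2`-cocycles `f, f'` are cohomologous if there are functions `g₁, g₂ : M → A` with
`g₁ 1 = 0 = g₂ 1` and
`f (x,y) + x • g₁ y + g₁ x + g₂ (x*y) = f' (x,y) + x • g₂ y + g₂ x + g₁ (x*y)`. -/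
def Cohomologous (f f' : M → M → A) : Prop :=
  ∃ g₁ g₂ : M → A, g₁ 1 = 0 ∧ g₂ 1 = 0 ∧
    ∀ x y : M, f x y + x • g₁ y + g₁ x + g₂ (x * y)
      = f' x y + x • g₂ y + g₂ x + g₁ (x * y)

variable {M A}

/-- The underlying set `B_f = A × M` of the Schreier extension `E_f` associated with a
`2`-cocycle `f`. -/
@[ext] structure Bf (f : Cocycle M A) where
  a : A
  x : M

namespace Bf

variable (f : Cocycle M A)

/-- The composition `(a₁, x) + (a₂, y) = (a₁ + x • a₂ + f (x, y), x * y)` on `B_f`. -/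
protected def add (p q : Bf f) : Bf f := ⟨p.a + p.x • q.a + f.1 p.x q.x, p.x * q.x⟩

instance : Zero (Bf f) := ⟨⟨0, 1⟩⟩
instance : Add (Bf f) := ⟨Bf.add f⟩

instance : AddMonoid (Bf f) where
  nsmul := nsmulRec
  add_assoc p q r := by
    show (Bf.add f (Bf.add f p q) r) = Bf.add f p (Bf.add f q r)
    unfold Bf.add
    have h := f.2.2.2 p.x q.x r.x
    simp only [Bf.mk.injEq]
    refine ⟨?_, mul_assoc _ _ _⟩
    calc p.a + p.x • q.a + f.1 p.x q.x + (p.x * q.x) • r.a + f.1 (p.x * q.x) r.x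
        = p.a + p.x • q.a + p.x • (q.x • r.a) + (f.1 (p.x * q.x) r.x + f.1 p.x q.x) := by
          rw [mul_smul]; abel
      _ = p.a + p.x • q.a + p.x • (q.x • r.a) + (p.x • f.1 q.x r.x + f.1 p.x (q.x * r.x)) := by
          rw [h]
      _ = p.a + p.x • (q.a + q.x • r.a + f.1 q.x r.x) + f.1 p.x (q.x * r.x) := by
          rw [smul_add, smul_add]; abel
  zero_add p := by
    show Bf.add f ⟨0, 1⟩ p = p
    unfold Bf.add
    cases p with
    | mk a x => simp [f.2.2.1 x]
  add_zero p := by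
    show Bf.add f p ⟨0, 1⟩ = p
    unfold Bf.add
    cases p with
    | mk a x => simp [f.2.1 x]

theorem add_def (p q : Bf f) : p + q = ⟨p.a + p.x • q.a + f.1 p.x q.x, p.x * q.x⟩ := rfl

theorem zero_def : (0 : Bf f) = ⟨0, 1⟩ := rfl

end Bf

/-- The inclusion `κ_f : A → B_f`, `a ↦ (a, 1)`. -/
def kappaF (f : Cocycle M A) : A →+ Bf f where
  toFun a := ⟨a, 1⟩
  map_zero' := rfl
  map_add' a b := by
    rw [Bf.add_def]
    simp [f.2.2.1]

/-- The projection `σ_f : B_f → M`, `(a, x) ↦ x`. -/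
def sigmaF (f : Cocycle M A) : Bf f → M := fun p => p.x

end Cocycles

section ExtOfCocycle

variable {M : Type u} {A : Type v} [Monoid M] [AddCommMonoid A] [DistribMulAction M A]

/-- The Schreier extension `E_f : A →^{κ_f} B_f →^{σ_f} M` of the `M`-semimodule `A` by `M`
associated with a `2`-cocycle `f`. -/
def extOfCocycle (f : Cocycle M A) : SchreierExtension M A where
  B := Bf f
  κ := kappaF f
  σ := sigmaF f
  sigma_zero := rfl
  sigma_add _ _ := rfl
  kappa_inj a b h := congrArg Bf.a h
  sigma_surj x := ⟨⟨0, x⟩, rfl⟩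
  range_eq b := by
    constructor
    · intro h
      exact ⟨b.a, by cases b; cases h; rfl⟩
    · rintro ⟨a, rfl⟩
      rfl
  rep_exists x := by
    refine ⟨⟨0, x⟩, rfl, fun b hb => ⟨b.a, ?_, ?_⟩⟩
    · cases b with
      | mk a y =>
        have hx : y = x := hb
        subst hx
        show Bf.mk a y = kappaF f a + ⟨0, y⟩
        rw [show kappaF f a = ⟨a, 1⟩ from rfl, Bf.add_def]
        simp [f.2.2.1]
    · intro a' ha'
      rw [show kappaF f a' = ⟨a', 1⟩ from rfl, Bf.add_def] at ha'
      have := congrArg Bf.a ha'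
      simpa [f.2.2.1] using this.symm
  compat a b := by
    show b + kappaF f a = kappaF f (b.x • a) + b
    rw [show kappaF f a = ⟨a, 1⟩ from rfl, show kappaF f (b.x • a) = ⟨b.x • a, 1⟩ from rfl,
      Bf.add_def, Bf.add_def]
    simp [f.2.1, f.2.2.1, add_comm]

end ExtOfCocycle

section Semidirect

variable (M : Type u) (A : Type v) [Monoid M] [AddCommMonoid A] [DistribMulAction M A]

/-- The underlying set `A × M` of the semidirect product `A ⋊ M`. -/
@[ext] structure SemidirectCarrier where
  a : A
  x : M

namespace SemidirectCarrier

variable {M A}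

/-- The composition `(a₁, x) + (a₂, y) = (a₁ + x • a₂, x * y)` on `A ⋊ M`. -/
protected def add (p q : SemidirectCarrier M A) : SemidirectCarrier M A :=
  ⟨p.a + p.x • q.a, p.x * q.x⟩

instance : Zero (SemidirectCarrier M A) := ⟨⟨0, 1⟩⟩
instance : Add (SemidirectCarrier M A) := ⟨SemidirectCarrier.add⟩

instance : AddMonoid (SemidirectCarrier M A) where
  nsmul := nsmulRec
  add_assoc p q r := by
    show SemidirectCarrier.add (SemidirectCarrier.add p q) r
      = SemidirectCarrier.add p (SemidirectCarrier.add q r)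
    unfold SemidirectCarrier.add
    simp only [SemidirectCarrier.mk.injEq]
    exact ⟨by rw [smul_add, mul_smul]; abel, mul_assoc _ _ _⟩
  zero_add p := by
    show SemidirectCarrier.add ⟨0, 1⟩ p = p
    unfold SemidirectCarrier.add
    cases p with
    | mk a x => simp
  add_zero p := by
    show SemidirectCarrier.add p ⟨0, 1⟩ = p
    unfold SemidirectCarrier.add
    cases p with
    | mk a x => simp

theorem add_def (p q : SemidirectCarrier M A) : p + q = ⟨p.a + p.x • q.a, p.x * q.x⟩ := rfl

end SemidirectCarrier

/-- The semidirect product extension `0 : A →^ι A ⋊ M →^π M`, with `ι a = (a, 1)` and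
`π (a, x) = x`. -/
def semidirectExtension : SchreierExtension M A where
  B := SemidirectCarrier M A
  κ :=
    { toFun := fun a => ⟨a, 1⟩
      map_zero' := rfl
      map_add' := fun a b => by rw [SemidirectCarrier.add_def]; simp }
  σ := fun p => p.x
  sigma_zero := rfl
  sigma_add _ _ := rfl
  kappa_inj a b h := congrArg SemidirectCarrier.a h
  sigma_surj x := ⟨⟨0, x⟩, rfl⟩
  range_eq b := by
    constructor
    · intro h
      exact ⟨b.a, by cases b; cases h; rfl⟩
    · rintro ⟨a, rfl⟩
      rfl
  rep_exists x := by
    refine ⟨⟨0, x⟩, rfl, fun b hb => ⟨b.a, ?_, ?_⟩⟩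
    · cases b with
      | mk a y =>
        have hx : y = x := hb
        subst hx
        show SemidirectCarrier.mk a y = SemidirectCarrier.add ⟨a, 1⟩ ⟨0, y⟩
        unfold SemidirectCarrier.add
        simp
    · intro a' ha'
      have := congrArg SemidirectCarrier.a ha'
      simpa [SemidirectCarrier.add_def] using this.symm
  compat a b := by
    show SemidirectCarrier.add b ⟨a, 1⟩ = SemidirectCarrier.add ⟨b.x • a, 1⟩ b
    unfold SemidirectCarrier.add
    simp [add_comm]

end Semidirect

section Similarity

variable {M : Type u} {A C : Type v} [Monoid M] [AddCommMonoid A] [DistribMulAction M A]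
  [AddCommGroup C] [DistribMulAction M C]

/-- Two Schreier extensions `E₁, E₂` of the `M`-semimodule `A` by `M` are similar
(relative to the group completion `k_A : A → K(A) = C`) if there are a Schreier extension
`S` of the `M`-module `K(A)` by `M` and morphisms of extensions `(k_A, β₁, 1_M) : E₁ → S`
and `(k_A, β₂, 1_M) : E₂ → S`. -/
def SchreierSimilar (kA : A →+ C) (E₁ E₂ : SchreierExtension M A) : Prop :=
  ∃ (S : SchreierExtension M C) (β₁ : E₁.B →+ S.B) (β₂ : E₂.B →+ S.B),
    IsSchreierHom E₁ S kA β₁ ∧ IsSchreierHom E₂ S kA β₂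


/-!
Choose in each extension `E` a normalized system of representatives `rep`; every `b` is then
`κ (coord b) + rep (σ b)`, and the factor set `f_E` of `rep` is a cocycle with
`coord (b₁ + b₂) = coord b₁ + σ b₁ • coord b₂ + f_E (σ b₁, σ b₂)`. Hence `b ↦ (k (coord b), σ b)`
maps `E` into the extension of `K(A)` given by `k ∘ f_E`, and so does `E_{f_E}`: every class is
in the image of `θ`. Cohomologous cocycles are handled the same way, shifting the first
coordinate by the coboundary.

Conversely, morphisms `E → S ← E'` carry the representatives of `E` and `E'` to two systems of
representatives of `S`, which differ by some `h : M → K(A)`; their factor sets then differ by the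
coboundary of `h`. Writing `h` as a difference of elements of `A` and cancelling (for cancellative
`A` the map `k` is injective) makes `f_E` and `f_{E'}` cohomologous, so `E ↦ [f_E]` is a left
inverse of `θ`.
-/

namespace SchreierExtension

variable (E : SchreierExtension M A)

theorem sigma_kappa (a : A) : E.σ (E.κ a) = 1 :=
  (E.range_eq _).mpr ⟨a, rfl⟩

theorem isRep_zero : E.IsRep 1 0 := by
  refine ⟨E.sigma_zero, fun b hb => ?_⟩
  obtain ⟨a, rfl⟩ := (E.range_eq b).mp hb
  exact ⟨a, (add_zero _).symm, fun a' ha' => E.kappa_inj (by simpa using ha'.symm)⟩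

open Classical in
noncomputable def rep (x : M) : E.B :=
  if x = 1 then 0 else (E.rep_exists x).choose

theorem rep_one : E.rep 1 = 0 := if_pos rfl

theorem isRep_rep (x : M) : E.IsRep x (E.rep x) := by
  unfold rep
  split_ifs with hx
  · exact hx ▸ E.isRep_zero
  · exact (E.rep_exists x).choose_spec

theorem sigma_rep (x : M) : E.σ (E.rep x) = x :=
  (E.isRep_rep x).1

theorem rep_add_kappa (x : M) (a : A) : E.rep x + E.κ a = E.κ (x • a) + E.rep x := by
  simpa only [sigma_rep] using E.compat a (E.rep x)

noncomputable def coord (b : E.B) : A :=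
  ((E.isRep_rep (E.σ b)).2 b rfl).choose

theorem eq_kappa_coord_add_rep (b : E.B) : b = E.κ (E.coord b) + E.rep (E.σ b) :=
  ((E.isRep_rep (E.σ b)).2 b rfl).choose_spec.1

theorem coord_eq_of_eq {b : E.B} {a : A} (h : b = E.κ a + E.rep (E.σ b)) : E.coord b = a :=
  (((E.isRep_rep (E.σ b)).2 b rfl).choose_spec.2 a h).symm

theorem coord_rep (x : M) : E.coord (E.rep x) = 0 :=
  E.coord_eq_of_eq (by rw [sigma_rep, map_zero, zero_add])

theorem coord_kappa (a : A) : E.coord (E.κ a) = a :=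
  E.coord_eq_of_eq (by rw [sigma_kappa, rep_one, add_zero])

noncomputable def factorSet (x y : M) : A :=
  E.coord (E.rep x + E.rep y)

theorem rep_add_rep (x y : M) :
    E.rep x + E.rep y = E.κ (E.factorSet x y) + E.rep (x * y) := by
  have h := E.eq_kappa_coord_add_rep (E.rep x + E.rep y)
  rwa [E.sigma_add, sigma_rep, sigma_rep] at h

theorem coord_add (b₁ b₂ : E.B) :
    E.coord (b₁ + b₂) = E.coord b₁ + E.σ b₁ • E.coord b₂ + E.factorSet (E.σ b₁) (E.σ b₂) := by
  apply coord_eq_of_eq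
  rw [E.sigma_add]
  calc b₁ + b₂
      = E.κ (E.coord b₁) + ((E.rep (E.σ b₁) + E.κ (E.coord b₂)) + E.rep (E.σ b₂)) := by
        conv_lhs => rw [E.eq_kappa_coord_add_rep b₁, E.eq_kappa_coord_add_rep b₂]
        simp only [add_assoc]
    _ = E.κ (E.coord b₁) + (E.κ (E.σ b₁ • E.coord b₂)
          + (E.κ (E.factorSet (E.σ b₁) (E.σ b₂)) + E.rep (E.σ b₁ * E.σ b₂))) := by
        rw [rep_add_kappa, add_assoc, rep_add_rep]
    _ = E.κ (E.coord b₁ + E.σ b₁ • E.coord b₂ + E.factorSet (E.σ b₁) (E.σ b₂))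
          + E.rep (E.σ b₁ * E.σ b₂) := by
        simp only [map_add, add_assoc]

theorem isCocycle_factorSet : IsCocycle M A E.factorSet := by
  refine ⟨fun x => ?_, fun y => ?_, fun x y z => ?_⟩
  · rw [factorSet, rep_one, add_zero, coord_rep]
  · rw [factorSet, rep_one, zero_add, coord_rep]
  · have h := congrArg E.coord (add_assoc (E.rep x) (E.rep y) (E.rep z))
    simp only [coord_add, E.sigma_add, sigma_rep, coord_rep, smul_zero, add_zero, zero_add] at h
    rw [add_comm (E.factorSet (x * y) z)]
    exact h.symm

noncomputable def cocycle : Cocycle M A :=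
  ⟨E.factorSet, E.isCocycle_factorSet⟩

theorem factorSets_differ_by_coboundary (S : SchreierExtension M A) {s t : M → S.B}
    {c c' : M → M → A} {h : M → A} (hs : ∀ x, S.IsRep x (s x))
    (hc : ∀ x y, s x + s y = S.κ (c x y) + s (x * y))
    (hc' : ∀ x y, t x + t y = S.κ (c' x y) + t (x * y))
    (hts : ∀ x, t x = S.κ (h x) + s x) (x y : M) :
    h x + x • h y + c x y = c' x y + h (x * y) := by
  have hσ : S.σ (t x + t y) = x * y := by
    simp only [S.sigma_add, hts, S.sigma_kappa, (hs _).1, one_mul]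
  obtain ⟨_, -, huniq⟩ := (hs (x * y)).2 _ hσ
  refine huniq _ ?_ |>.trans (huniq _ ?_).symm
  · calc t x + t y = S.κ (h x) + ((s x + S.κ (h y)) + s y) := by simp only [hts, add_assoc]
      _ = S.κ (h x + x • h y + c x y) + s (x * y) := by
        rw [S.compat, (hs x).1, add_assoc, hc]
        simp only [map_add, add_assoc]
  · show t x + t y = _
    rw [hc', hts, map_add, add_assoc]

end SchreierExtension

section ExtOfCocycle

variable {N : Type*} [AddCommMonoid N] [DistribMulAction M N]

def Cocycle.map (k : A →+ N) (hk : ∀ (x : M) (a : A), k (x • a) = x • k a)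
    (f : Cocycle M A) : Cocycle M N :=
  ⟨fun x y => k (f.1 x y), fun x => by simp [f.2.1 x], fun y => by simp [f.2.2.1 y],
    fun x y z => by simpa [hk] using congrArg k (f.2.2.2 x y z)⟩

theorem extOfCocycle_add (f : Cocycle M N) (p q : (extOfCocycle f).B) :
    p + q = (⟨p.a + p.x • q.a + f.1 p.x q.x, p.x * q.x⟩ : Bf f) :=
  rfl

theorem extOfCocycle_sigma (f : Cocycle M N) (p : (extOfCocycle f).B) :
    (extOfCocycle f).σ p = p.x :=
  rfl

theorem extOfCocycle_kappa (f : Cocycle M N) (a : N) :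
    (extOfCocycle f).κ a = (⟨a, 1⟩ : Bf f) :=
  rfl

theorem extOfCocycle_kappa_add (f : Cocycle M N) (a : N) (p : (extOfCocycle f).B) :
    (extOfCocycle f).κ a + p = (⟨a + p.a, p.x⟩ : Bf f) := by
  rw [extOfCocycle_add]
  show (⟨a + 1 • p.a + f.1 1 p.x, 1 * p.x⟩ : Bf f) = _
  simp [f.2.2.1]

end ExtOfCocycle

theorem semidirectExtension_add (p q : (semidirectExtension M A).B) :
    p + q = (⟨p.a + p.x • q.a, p.x * q.x⟩ : SemidirectCarrier M A) :=
  rfl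

theorem semidirectExtension_sigma (p : (semidirectExtension M A).B) :
    (semidirectExtension M A).σ p = p.x :=
  rfl

theorem cohomologous_extOfCocycle_cocycle (f : Cocycle M A) :
    Cohomologous M A f.1 (extOfCocycle f).cocycle.1 := by
  refine ⟨fun x => ((extOfCocycle f).rep x).a, fun _ => 0,
    congrArg Bf.a (extOfCocycle f).rep_one, rfl, fun x y => ?_⟩
  have h := congrArg Bf.a ((extOfCocycle f).rep_add_rep x y)
  rw [extOfCocycle_add, extOfCocycle_kappa_add] at h
  simp only [← extOfCocycle_sigma, SchreierExtension.sigma_rep] at h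
  simp only [smul_zero, add_zero]
  show _ = (extOfCocycle f).factorSet x y + _
  rw [← h]
  abel

/-- Over a group `C` the decomposition `b = κ (b.a - p.a) + p` is unique for every `p`. -/
theorem isRep_extOfCocycle (h : Cocycle M C) (p : (extOfCocycle h).B) :
    (extOfCocycle h).IsRep p.x p := by
  refine ⟨rfl, fun b hb => ⟨b.a - p.a, ?_, fun a' (ha' : b = _) => ?_⟩⟩
  · show b = _
    rw [extOfCocycle_kappa_add, sub_add_cancel]
    exact Bf.ext rfl hb
  · rw [ha', extOfCocycle_kappa_add, add_sub_cancel_right]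

/-- The morphism is `b ↦ (d b, σ b)`; the twisted additivity of `d` is its additivity. -/
theorem exists_isSchreierHom_extOfCocycle (kA : A →+ C) (E : SchreierExtension M A)
    (h : Cocycle M C) (d : E.B → C)
    (hd : ∀ b₁ b₂, d (b₁ + b₂) = d b₁ + E.σ b₁ • d b₂ + h.1 (E.σ b₁) (E.σ b₂))
    (hdκ : ∀ a, d (E.κ a) = kA a) :
    ∃ β, IsSchreierHom E (extOfCocycle h) kA β := by
  have hd0 : d 0 = 0 := by simpa using hdκ 0
  let β : E.B →+ (extOfCocycle h).B :=
    { toFun := fun b => ⟨d b, E.σ b⟩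
      map_zero' := by rw [hd0, E.sigma_zero]; rfl
      map_add' := fun b₁ b₂ => Bf.ext (hd b₁ b₂) (E.sigma_add b₁ b₂) }
  refine ⟨β, fun a => ?_, fun b => rfl, fun x u hu => ?_⟩
  · show (⟨d (E.κ a), E.σ (E.κ a)⟩ : Bf h) = ⟨kA a, 1⟩
    rw [hdκ, E.sigma_kappa]
  · rw [← hu.1]
    exact isRep_extOfCocycle h (β u)

/-- The morphism is `(a, x) ↦ (kA a + δ x, x)`. -/
theorem exists_isSchreierHom_extOfCocycle_of_coboundary (kA : A →+ C)
    (hk : ∀ (x : M) (a : A), kA (x • a) = x • kA a) (f : Cocycle M A) (h : Cocycle M C)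
    (δ : M → C) (hδ : ∀ x y, δ x + x • δ y + h.1 x y = kA (f.1 x y) + δ (x * y)) :
    ∃ β, IsSchreierHom (extOfCocycle f) (extOfCocycle h) kA β := by
  have hδ1 : δ 1 = 0 := by simpa [f.2.1, h.2.1] using hδ 1 1
  refine exists_isSchreierHom_extOfCocycle kA _ h (fun p => kA p.a + δ p.x)
    (fun p q => ?_) (fun a => by rw [extOfCocycle_kappa, hδ1, add_zero])
  simp only [extOfCocycle_add, extOfCocycle_sigma, map_add, hk, smul_add]
  linear_combination (norm := abel) -hδ p.x q.x

theorem exists_isSchreierHom_extOfCocycle_map (kA : A →+ C)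
    (hk : ∀ (x : M) (a : A), kA (x • a) = x • kA a) (f : Cocycle M A) :
    ∃ β, IsSchreierHom (extOfCocycle f) (extOfCocycle (f.map kA hk)) kA β :=
  exists_isSchreierHom_extOfCocycle_of_coboundary kA hk f _ 0 fun x y => by simp [Cocycle.map]

theorem similar_extOfCocycle_of_cohomologous (kA : A →+ C)
    (hk : ∀ (x : M) (a : A), kA (x • a) = x • kA a) {f f' : Cocycle M A}
    (hff' : Cohomologous M A f.1 f'.1) :
    SchreierSimilar kA (extOfCocycle f) (extOfCocycle f') := by
  obtain ⟨g₁, g₂, -, -, hg⟩ := hff'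
  obtain ⟨β₁, hβ₁⟩ := exists_isSchreierHom_extOfCocycle_of_coboundary kA hk f (f'.map kA hk)
    (fun x => kA (g₂ x) - kA (g₁ x)) fun x y => by
      have := congrArg kA (hg x y)
      simp only [map_add, hk] at this
      simp only [Cocycle.map, smul_sub]
      linear_combination (norm := abel) -this
  obtain ⟨β₂, hβ₂⟩ := exists_isSchreierHom_extOfCocycle_map kA hk f'
  exact ⟨_, β₁, β₂, hβ₁, hβ₂⟩

theorem similar_extOfCocycle_cocycle (kA : A →+ C)
    (hk : ∀ (x : M) (a : A), kA (x • a) = x • kA a) (E : SchreierExtension M A) :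
    SchreierSimilar kA E (extOfCocycle E.cocycle) := by
  obtain ⟨β₁, hβ₁⟩ := exists_isSchreierHom_extOfCocycle kA E (E.cocycle.map kA hk)
    (fun b => kA (E.coord b))
    (fun b₁ b₂ => by simp [E.coord_add, hk, Cocycle.map, SchreierExtension.cocycle])
    (fun a => by rw [E.coord_kappa])
  obtain ⟨β₂, hβ₂⟩ := exists_isSchreierHom_extOfCocycle_map kA hk E.cocycle
  exact ⟨_, β₁, β₂, hβ₁, hβ₂⟩

theorem similar_extOfCocycle_zeroCocycle_semidirectExtension (kA : A →+ C)
    (hk : ∀ (x : M) (a : A), kA (x • a) = x • kA a) :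
    SchreierSimilar kA (extOfCocycle (zeroCocycle M A)) (semidirectExtension M A) := by
  obtain ⟨β₁, hβ₁⟩ := exists_isSchreierHom_extOfCocycle_map kA hk (zeroCocycle M A)
  obtain ⟨β₂, hβ₂⟩ := exists_isSchreierHom_extOfCocycle kA (semidirectExtension M A)
    ((zeroCocycle M A).map kA hk) (fun p => kA p.a)
    (fun p q => by
      simp [semidirectExtension_add, semidirectExtension_sigma, hk, Cocycle.map, zeroCocycle])
    (fun a => rfl)
  exact ⟨_, β₁, β₂, hβ₁, hβ₂⟩

theorem SchreierSimilar.exists_coboundary {kA : A →+ C} {E E' : SchreierExtension M A}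
    (hsim : SchreierSimilar kA E E') :
    ∃ h : M → C, ∀ x y,
      h x + x • h y + kA (E.factorSet x y) = kA (E'.factorSet x y) + h (x * y) := by
  obtain ⟨S, β₁, β₂, ⟨hβ₁κ, -, hβ₁rep⟩, ⟨hβ₂κ, hβ₂σ, -⟩⟩ := hsim
  have hs : ∀ x, S.IsRep x (β₁ (E.rep x)) := fun x => hβ₁rep x _ (E.isRep_rep x)
  have ht : ∀ x, ∃ c, β₂ (E'.rep x) = S.κ c + β₁ (E.rep x) := fun x =>
    ((hs x).2 _ (by rw [hβ₂σ, E'.sigma_rep])).exists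
  choose h hts using ht
  refine ⟨h, S.factorSets_differ_by_coboundary hs (fun x y => ?_) (fun x y => ?_) hts⟩
  · rw [← map_add, E.rep_add_rep, map_add, hβ₁κ]
  · rw [← map_add, E'.rep_add_rep, map_add, hβ₂κ]

theorem cohomologous_of_map_differ_by_coboundary (kA : A →+ C) (hk_inj : Function.Injective kA)
    (hk_sur : ∀ c : C, ∃ a a' : A, c = kA a - kA a')
    (hk : ∀ (x : M) (a : A), kA (x • a) = x • kA a) (f f' : Cocycle M A) (h : M → C)
    (hh : ∀ x y, h x + x • h y + kA (f.1 x y) = kA (f'.1 x y) + h (x * y)) :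
    Cohomologous M A f.1 f'.1 := by
  classical
  have h1 : h 1 = 0 := by simpa [f.2.1, f'.2.1] using hh 1 1
  choose p q hpq using fun x => hk_sur (h x)
  set g₁ := fun x => if x = 1 then 0 else p x
  set g₂ := fun x => if x = 1 then 0 else q x
  have hg : ∀ x, h x = kA (g₁ x) - kA (g₂ x) := fun x => by
    by_cases hx : x = 1
    · simp [g₁, g₂, hx, h1]
    · simp [g₁, g₂, hx, hpq x]
  refine ⟨g₁, g₂, if_pos rfl, if_pos rfl, fun x y => hk_inj ?_⟩
  have := hh x y
  simp only [hg, smul_sub] at this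
  simp only [map_add, hk]
  linear_combination (norm := abel) this

theorem cohomologous_cocycle_of_similar (kA : A →+ C) (hk_inj : Function.Injective kA)
    (hk_sur : ∀ c : C, ∃ a a' : A, c = kA a - kA a')
    (hk : ∀ (x : M) (a : A), kA (x • a) = x • kA a) {E E' : SchreierExtension M A}
    (hsim : SchreierSimilar kA E E') : Cohomologous M A E.cocycle.1 E'.cocycle.1 :=
  let ⟨h, hh⟩ := hsim.exists_coboundary
  cohomologous_of_map_differ_by_coboundary kA hk_inj hk_sur hk E.cocycle E'.cocycle h hh

/-- Let `M` be a monoid and `A` an `M`-semimodule, with group completion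
`k_A : A → K(A) = C`.  The map `θ(M,A) : H²(M,A) → E(M,A)` from the set of cohomology
classes of `2`-cocycles to the set of similarity classes of Schreier extensions of `A` by
`M`, sending the class of a `2`-cocycle `f` to the class of the extension `E_f`, is a
well-defined surjective map of pointed sets (the class of the zero cocycle goes to the
class of the semidirect product extension).  If moreover `A` is cancellative, then
`θ(M,A)` is a bijection. -/
theorem theta_surjective_bijective (kA : A →+ C)
    (hk_eq : ∀ a a' : A, kA a = kA a' ↔ ∃ z : A, a + z = a' + z)
    (hk_sur : ∀ c : C, ∃ a a' : A, c = kA a - kA a')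
    (hk_act : ∀ (x : M) (a : A), kA (x • a) = x • kA a) :
    ∃ θ : Quot (fun F F' : Cocycle M A => Cohomologous M A F.1 F'.1)
        → Quot (SchreierSimilar (M := M) kA),
      (∀ F : Cocycle M A, θ (Quot.mk _ F) = Quot.mk _ (extOfCocycle F)) ∧
      Function.Surjective θ ∧
      θ (Quot.mk _ (zeroCocycle M A)) = Quot.mk _ (semidirectExtension M A) ∧
      ((∀ a b c : A, a + b = a + c → b = c) → Function.Bijective θ) := by
  let θ : Quot (fun F F' : Cocycle M A => Cohomologous M A F.1 F'.1)
      → Quot (SchreierSimilar (M := M) kA) :=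
    Quot.lift (fun F => Quot.mk _ (extOfCocycle F))
      fun _ _ hFF' => Quot.sound (similar_extOfCocycle_of_cohomologous kA hk_act hFF')
  have hθ_surj : Function.Surjective θ := Quot.ind fun E =>
    ⟨Quot.mk _ E.cocycle, (Quot.sound (similar_extOfCocycle_cocycle kA hk_act E)).symm⟩
  refine ⟨θ, fun _ => rfl, hθ_surj,
    Quot.sound (similar_extOfCocycle_zeroCocycle_semidirectExtension kA hk_act),
    fun hcanc => ⟨?_, hθ_surj⟩⟩
  have hk_inj : Function.Injective kA := fun a a' ha => by
    obtain ⟨z, hz⟩ := (hk_eq a a').mp ha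
    exact hcanc z a a' (by rwa [add_comm z, add_comm z])
  let ψ : Quot (SchreierSimilar (M := M) kA)
      → Quot (fun F F' : Cocycle M A => Cohomologous M A F.1 F'.1) :=
    Quot.lift (fun E => Quot.mk _ E.cocycle)
      fun _ _ hEE' => Quot.sound (cohomologous_cocycle_of_similar kA hk_inj hk_sur hk_act hEE')
  exact Function.LeftInverse.injective (g := ψ) <| Quot.ind fun F =>
    (Quot.sound (r := fun F F' : Cocycle M A => Cohomologous M A F.1 F'.1)
      (cohomologous_extOfCocycle_cocycle F)).symm

end Similarity
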